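/- For every k ∈ {0,…,T}, the matrix Π_k defined by the backward Riccati recursion is symmetric positive semidefinite. -/

import Mathlib

open Matrix Filter Topology

/-- The unique symmetric positive semidefinite square root of a positive
semidefinite real matrix (junk value `0` if the matrix is not PSD). -/
noncomputable def msqrt {d : ℕ} (X : Matrix (Fin d) (Fin d) ℝ) :
    Matrix (Fin d) (Fin d) ℝ :=
  letI := Classical.propDecidable X.PosSemidef
  if h : X.PosSemidef then
    (h.1.eigenvectorUnitary : Matrix (Fin d) (Fin d) ℝ) *
      diagonal ((↑) ∘ (h.1.eigenvalues · |>.sqrt)) *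
      (star h.1.eigenvectorUnitary : Matrix (Fin d) (Fin d) ℝ)
  else 0

/-- The Frobenius norm of a real square matrix. -/
noncomputable def frob {d : ℕ} (X : Matrix (Fin d) (Fin d) ℝ) : ℝ :=
  Real.sqrt (∑ i, ∑ j, X i j ^ 2)

/-- Data of the mutual information optimal control problem for a discrete-time
linear system `x_{k+1} = A_k x_k + B_k u_k + w_k`. -/
structure LQData (n m : ℕ) where
  ε : ℝ
  A : ℕ → Matrix (Fin n) (Fin n) ℝ
  B : ℕ → Matrix (Fin n) (Fin m) ℝ
  R : ℕ → Matrix (Fin m) (Fin m) ℝ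
  F : Matrix (Fin n) (Fin n) ℝ
  Sw : ℕ → Matrix (Fin n) (Fin n) ℝ
  Sini : Matrix (Fin n) (Fin n) ℝ

namespace LQData

variable {n m : ℕ} (P : LQData n m) (T : ℕ) (Srho : ℕ → Matrix (Fin m) (Fin m) ℝ)

/-- The backward Riccati recursion `Π_k` associated with the prior covariances
`Σ_{ρ_k}`: `Π_T = F` and
`Π_k = A_kᵀ Π_{k+1} A_k − (1/ε) A_kᵀ Π_{k+1} B_k Σ^{1/2} (I + Σ^{1/2} C_k Σ^{1/2})⁻¹ Σ^{1/2} B_kᵀ Π_{k+1} A_k`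
with `C_k = (R_k + B_kᵀ Π_{k+1} B_k)/ε`. -/
noncomputable def Ric (k : ℕ) : Matrix (Fin n) (Fin n) ℝ :=
  if h : T ≤ k then P.F
  else
    let Pk := Ric (k + 1)
    let S := msqrt (Srho k)
    let C := (1 / P.ε) • (P.R k + (P.B k)ᵀ * Pk * P.B k)
    (P.A k)ᵀ * Pk * P.A k -
      (1 / P.ε) • ((P.A k)ᵀ * Pk * P.B k * S * (1 + S * C * S)⁻¹ * S * (P.B k)ᵀ * Pk * P.A k)
termination_by T - k
decreasing_by omega

/-- `C_k = (R_k + B_kᵀ Π_{k+1} B_k)/ε`. -/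
noncomputable def Ck (k : ℕ) : Matrix (Fin m) (Fin m) ℝ :=
  (1 / P.ε) • (P.R k + (P.B k)ᵀ * P.Ric T Srho (k + 1) * P.B k)

/-- `Σ_{Q_k} = ε (R_k + B_kᵀ Π_{k+1} B_k)⁻¹`. -/
noncomputable def SigQ (k : ℕ) : Matrix (Fin m) (Fin m) ℝ :=
  P.ε • (P.R k + (P.B k)ᵀ * P.Ric T Srho (k + 1) * P.B k)⁻¹

/-- Covariance `Σ_{π_k}` of the optimal policy for the fixed prior. -/
noncomputable def SigPi (k : ℕ) : Matrix (Fin m) (Fin m) ℝ :=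
  msqrt (Srho k) * (1 + msqrt (Srho k) * P.Ck T Srho k * msqrt (Srho k))⁻¹ * msqrt (Srho k)

/-- Feedback gain `P_k = −(1/ε) Σ_{π_k} B_kᵀ Π_{k+1} A_k`. -/
noncomputable def Pgain (k : ℕ) : Matrix (Fin m) (Fin n) ℝ :=
  -((1 / P.ε) • (P.SigPi T Srho k * (P.B k)ᵀ * P.Ric T Srho (k + 1) * P.A k))

/-- Forward state covariance recursion under the optimal policy. -/
noncomputable def Sigx : ℕ → Matrix (Fin n) (Fin n) ℝ
  | 0 => P.Sini
  | k + 1 =>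
    (P.A k + P.B k * P.Pgain T Srho k) * Sigx k *
        (P.A k + P.B k * P.Pgain T Srho k)ᵀ +
      P.B k * P.SigPi T Srho k * (P.B k)ᵀ + P.Sw k

/-- The standard LQR Riccati recursion `Π̌_k`. -/
noncomputable def RicLQR (k : ℕ) : Matrix (Fin n) (Fin n) ℝ :=
  if h : T ≤ k then P.F
  else
    let Pk := RicLQR (k + 1)
    (P.A k)ᵀ * Pk * P.A k -
      (P.A k)ᵀ * Pk * P.B k * (P.R k + (P.B k)ᵀ * Pk * P.B k)⁻¹ * (P.B k)ᵀ * Pk * P.A k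
termination_by T - k
decreasing_by omega

/-- `Π̂_k = A_kᵀ ⋯ A_{T−1}ᵀ F A_{T−1} ⋯ A_k`. -/
noncomputable def RicHat (k : ℕ) : Matrix (Fin n) (Fin n) ℝ :=
  if h : T ≤ k then P.F
  else (P.A k)ᵀ * RicHat (k + 1) * P.A k
termination_by T - k
decreasing_by omega

/-- `Σ_{w_{k−1}}` with the convention `Σ_{w_{−1}} := Σ_{x_ini}`. -/
noncomputable def Swm1 (k : ℕ) : Matrix (Fin n) (Fin n) ℝ :=
  if k = 0 then P.Sini else P.Sw (k - 1)

/-- The matrix `M̌_k` from the sufficient condition for stochastic optimal policies. -/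
noncomputable def Mcheck (k : ℕ) : Matrix (Fin m) (Fin m) ℝ :=
  (P.R k + (P.B k)ᵀ * P.RicHat T (k + 1) * P.B k)⁻¹ *
      ((P.B k)ᵀ * P.RicLQR T (k + 1) * P.A k * P.Swm1 k * (P.A k)ᵀ *
        P.RicLQR T (k + 1) * P.B k) *
      (P.R k + (P.B k)ᵀ * P.RicHat T (k + 1) * P.B k)⁻¹ -
    P.ε • (P.R k + (P.B k)ᵀ * P.RicLQR T (k + 1) * P.B k)⁻¹

/-- State covariance under the zero control input. -/
noncomputable def SigxZero : ℕ → Matrix (Fin n) (Fin n) ℝ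
  | 0 => P.Sini
  | k + 1 => P.A k * SigxZero k * (P.A k)ᵀ + P.Sw k

/-- The matrix `M̂_k^zero` from the sufficient condition for deterministic optimal policies. -/
noncomputable def MhatZero (k : ℕ) : Matrix (Fin m) (Fin m) ℝ :=
  (P.R k + (P.B k)ᵀ * P.RicLQR T (k + 1) * P.B k)⁻¹ *
      ((P.B k)ᵀ * P.RicHat T (k + 1) * P.A k * P.SigxZero k * (P.A k)ᵀ *
        P.RicHat T (k + 1) * P.B k) *
      (P.R k + (P.B k)ᵀ * P.RicLQR T (k + 1) * P.B k)⁻¹ -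
    P.ε • (P.R k + (P.B k)ᵀ * P.RicHat T (k + 1) * P.B k)⁻¹


/-- The backward recursion `r_k` for the mean offset:
`r_T = 0` and `r_k = A_k⁻¹ r_{k+1} − Π_k⁻¹ A_kᵀ Π_{k+1} B_k (I + Σ_{ρ_k} C_k)⁻¹ μ_{ρ_k}`. -/
noncomputable def rvec (μ : ℕ → Fin m → ℝ) (k : ℕ) : Fin n → ℝ :=
  if h : T ≤ k then 0
  else
    ((P.A k)⁻¹).mulVec (rvec μ (k + 1)) -
      ((P.Ric T Srho k)⁻¹ * ((P.A k)ᵀ * P.Ric T Srho (k + 1) * P.B k *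
        (1 + Srho k * P.Ck T Srho k)⁻¹)).mulVec (μ k)
termination_by T - k
decreasing_by omega

/-- `Θ_k = ε C_k − ε C_k Σ_{π_k} C_k − (I − C_k Σ_{π_k}) B_kᵀ Π_{k+1} A_k Π_k⁻¹ A_kᵀ Π_{k+1} B_k (I − Σ_{π_k} C_k)`. -/
noncomputable def Theta (k : ℕ) : Matrix (Fin m) (Fin m) ℝ :=
  P.ε • P.Ck T Srho k - P.ε • (P.Ck T Srho k * P.SigPi T Srho k * P.Ck T Srho k) -
    (1 - P.Ck T Srho k * P.SigPi T Srho k) *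
      ((P.B k)ᵀ * P.Ric T Srho (k + 1) * P.A k * (P.Ric T Srho k)⁻¹ *
        ((P.A k)ᵀ * P.Ric T Srho (k + 1) * P.B k)) *
      (1 - P.SigPi T Srho k * P.Ck T Srho k)

end LQData

/-- Extend a `T`-tuple of matrices to a function on `ℕ` (by zero). -/
def extT {m : ℕ} (T : ℕ) (σ : Fin T → Matrix (Fin m) (Fin m) ℝ) :
    ℕ → Matrix (Fin m) (Fin m) ℝ :=
  fun k => if h : k < T then σ ⟨k, h⟩ else 0


/-- Extend a `T`-tuple of vectors to a function on `ℕ` (by zero). -/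
def extV {m : ℕ} (T : ℕ) (μ : Fin T → Fin m → ℝ) : ℕ → Fin m → ℝ :=
  fun k => if h : k < T then μ ⟨k, h⟩ else 0

namespace LQData

variable {n m : ℕ} (P : LQData n m) (T : ℕ)

/-- The reduced objective `J̌` as a function of the `T`-tuple of prior covariances. -/
noncomputable def Jcheck (σ : Fin T → Matrix (Fin m) (Fin m) ℝ) : ℝ :=
  (1 / 2) * ((P.Ric T (extT T σ) 0 * P.Sini).trace +
    ∑ k : Fin T,
      (P.ε * Real.log ((extT T σ k + P.SigQ T (extT T σ) k).det / (P.SigQ T (extT T σ) k).det) +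
        (P.Ric T (extT T σ) (k + 1) * P.Sw k).trace))

/-- `L_k = (Σ_{Q_k} + Σ_{ρ_k})⁻¹`. -/
noncomputable def Lmat (Srho : ℕ → Matrix (Fin m) (Fin m) ℝ) (k : ℕ) :
    Matrix (Fin m) (Fin m) ℝ :=
  (P.SigQ T Srho k + Srho k)⁻¹

/-- `E_k = (1/ε) Σ_{Q_k} B_kᵀ Π_{k+1} A_k`. -/
noncomputable def Emat (Srho : ℕ → Matrix (Fin m) (Fin m) ℝ) (k : ℕ) :
    Matrix (Fin m) (Fin n) ℝ :=
  (1 / P.ε) • (P.SigQ T Srho k * (P.B k)ᵀ * P.Ric T Srho (k + 1) * P.A k)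

/-- `J̌'_k = (ε/2) L_k (Σ_{ρ_k} + Σ_{Q_k} − E_k Σ_{x_k} E_kᵀ) L_k`. -/
noncomputable def Jprime (Srho : ℕ → Matrix (Fin m) (Fin m) ℝ) (k : ℕ) :
    Matrix (Fin m) (Fin m) ℝ :=
  (P.ε / 2) • (P.Lmat T Srho k *
    (Srho k + P.SigQ T Srho k - P.Emat T Srho k * P.Sigx T Srho k * (P.Emat T Srho k)ᵀ) *
    P.Lmat T Srho k)

/-- The alternating-optimization update map `𝒯` on `T`-tuples of prior covariances:
`𝒯(σ)_k = Σ_{π_k} + P_k Σ_{x_k} P_kᵀ`. -/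
noncomputable def Tmap (σ : Fin T → Matrix (Fin m) (Fin m) ℝ) :
    Fin T → Matrix (Fin m) (Fin m) ℝ :=
  fun k =>
    P.SigPi T (extT T σ) k +
      P.Pgain T (extT T σ) k * P.Sigx T (extT T σ) k * (P.Pgain T (extT T σ) k)ᵀ

/-- The objective `J` as a function of the prior means, for fixed prior covariances:
`J(μ) = (1/2)( r_0ᵀ Π_0 r_0 + Σ_k μ_{ρ_k}ᵀ Θ_k μ_{ρ_k} )`. -/
noncomputable def Jmean (Srho : ℕ → Matrix (Fin m) (Fin m) ℝ) (μ : Fin T → Fin m → ℝ) : ℝ :=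
  (1 / 2) *
    (P.rvec T Srho (extV T μ) 0 ⬝ᵥ (P.Ric T Srho 0).mulVec (P.rvec T Srho (extV T μ) 0) +
      ∑ k : Fin T, μ k ⬝ᵥ (P.Theta T Srho k).mulVec (μ k))

end LQData

open Matrix Filter Topology LQData

/-!
With `K = B_k Σ_{ρ_k}^{1/2}` and `M = ε I + Σ_{ρ_k}^{1/2} R_k Σ_{ρ_k}^{1/2} ≻ 0`, one step of the
recursion reads `Π_k = A_kᵀ (Π − Π K (M + Kᵀ Π K)⁻¹ Kᵀ Π) A_k` with `Π = Π_{k+1}`. The middle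
factor is a Schur complement of a positive semidefinite block matrix, so positive
semidefiniteness propagates backwards from `Π_T = F`.
-/

open scoped ComplexOrder

namespace Matrix

theorem inv_smul_of_ne_zero {K : Type*} [Field K] {n : Type*} [Fintype n] [DecidableEq n]
    {c : K} (hc : c ≠ 0) (A : Matrix n n K) : (c • A)⁻¹ = c⁻¹ • A⁻¹ := by
  by_cases hA : IsUnit A.det
  · exact inv_smul' A (Units.mk0 c hc) hA
  · have hcA : ¬IsUnit (c • A).det := by simpa [det_smul, hc] using hA
    rw [nonsing_inv_apply_not_isUnit _ hA, nonsing_inv_apply_not_isUnit _ hcA, smul_zero]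

variable {𝕜 : Type*} [RCLike 𝕜] {m n : Type*} [Fintype m] [Fintype n] [DecidableEq m]
  [DecidableEq n]

/-- The Schur complement of the positive semidefinite block matrix
`[[M + Kᴴ Q K, Kᴴ Q], [Q K, Q]] = [[M, 0], [0, 0]] + [K, 1]ᴴ Q [K, 1]`. -/
theorem PosSemidef.sub_mul_inv_mul_conjTranspose {Q : Matrix n n 𝕜} {M : Matrix m m 𝕜}
    (hQ : Q.PosSemidef) (hM : M.PosDef) (K : Matrix n m 𝕜) :
    (Q - Q * K * (M + Kᴴ * Q * K)⁻¹ * Kᴴ * Q).PosSemidef := by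
  have hX : (M + Kᴴ * Q * K).PosDef := hM.add_posSemidef (hQ.conjTranspose_mul_mul_same K)
  have := hX.isUnit.invertible
  have := hM.isUnit.invertible
  have hM0 : (fromBlocks M 0 (0 : Matrix m n 𝕜)ᴴ (0 : Matrix n n 𝕜)).PosSemidef :=
    (PosDef.fromBlocks₁₁ 0 0 hM).2 (by simpa using PosSemidef.zero)
  have hblock : fromBlocks (M + Kᴴ * Q * K) (Kᴴ * Q) (Kᴴ * Q)ᴴ Q =
      fromBlocks M 0 0ᴴ 0 + (fromCols K 1)ᴴ * Q * fromCols K 1 := by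
    rw [conjTranspose_fromCols_eq_fromRows_conjTranspose, fromRows_mul, fromRows_mul_fromCols,
      fromBlocks_add, conjTranspose_mul, hQ.1.eq]
    simp [Matrix.mul_assoc]
  have hSchur := (PosDef.fromBlocks₁₁ (Kᴴ * Q) Q hX).1
    (hblock ▸ hM0.add (hQ.conjTranspose_mul_mul_same _))
  rwa [conjTranspose_mul, hQ.1.eq, conjTranspose_conjTranspose, ← Matrix.mul_assoc] at hSchur

end Matrix

theorem msqrt_transpose {d : ℕ} (X : Matrix (Fin d) (Fin d) ℝ) : (msqrt X)ᵀ = msqrt X := by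
  rw [← conjTranspose_eq_transpose_of_trivial]
  unfold msqrt
  split_ifs
  · exact isHermitian_mul_mul_conjTranspose _ (isHermitian_diagonal _)
  · exact conjTranspose_zero

section RiccatiStep

variable {n m : Type*} [Fintype n] [Fintype m] [DecidableEq m]

/-- One step `Π_{k+1} ↦ Π_k` of the backward recursion, with `S` in the role of `Σ_{ρ_k}^{1/2}`. -/
noncomputable def riccatiStep (ε : ℝ) (A : Matrix n n ℝ) (B : Matrix n m ℝ)
    (R S : Matrix m m ℝ) (Q : Matrix n n ℝ) : Matrix n n ℝ :=
  Aᵀ * Q * A - (1 / ε) •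
    (Aᵀ * Q * B * S * (1 + S * ((1 / ε) • (R + Bᵀ * Q * B)) * S)⁻¹ * S * Bᵀ * Q * A)

theorem riccatiStep_eq {ε : ℝ} (hε : ε ≠ 0) (A : Matrix n n ℝ) (B : Matrix n m ℝ)
    (R : Matrix m m ℝ) {S : Matrix m m ℝ} (hS : Sᵀ = S) (Q : Matrix n n ℝ) :
    riccatiStep ε A B R S Q = Aᵀ *
      (Q - Q * (B * S) * (ε • 1 + S * R * S + (B * S)ᵀ * Q * (B * S))⁻¹ * (B * S)ᵀ * Q) * A := by
  have hscale : 1 + S * ((1 / ε) • (R + Bᵀ * Q * B)) * S =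
      (1 / ε) • (ε • 1 + S * R * S + (B * S)ᵀ * Q * (B * S)) := by
    simp only [transpose_mul, hS, smul_add, smul_smul, one_div, inv_mul_cancel₀ hε, one_smul,
      Matrix.mul_smul, Matrix.smul_mul, Matrix.mul_add, Matrix.add_mul, Matrix.mul_assoc, add_assoc]
  rw [riccatiStep, hscale, Matrix.inv_smul_of_ne_zero (one_div_ne_zero hε)]
  simp only [transpose_mul, hS, Matrix.mul_sub, Matrix.sub_mul, Matrix.mul_smul,
    Matrix.smul_mul, smul_smul, Matrix.mul_assoc, one_div, inv_inv, inv_mul_cancel₀ hε, one_smul]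

theorem riccatiStep_posSemidef [DecidableEq n] {ε : ℝ} (hε : 0 < ε) (A : Matrix n n ℝ)
    (B : Matrix n m ℝ) {R : Matrix m m ℝ} (hR : R.PosDef) {S : Matrix m m ℝ} (hS : Sᵀ = S)
    {Q : Matrix n n ℝ} (hQ : Q.PosSemidef) : (riccatiStep ε A B R S Q).PosSemidef := by
  have hM : (ε • 1 + S * R * S).PosDef := by
    refine (PosDef.one.smul hε).add_posSemidef ?_
    simpa [conjTranspose_eq_transpose_of_trivial, hS] using
      hR.posSemidef.conjTranspose_mul_mul_same S
  rw [riccatiStep_eq hε.ne' A B R hS Q]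
  simpa [conjTranspose_eq_transpose_of_trivial] using
    (hQ.sub_mul_inv_mul_conjTranspose hM (B * S)).conjTranspose_mul_mul_same A

end RiccatiStep

namespace LQData

theorem Ric_of_lt {n m : ℕ} (P : LQData n m) {T k : ℕ} (Srho : ℕ → Matrix (Fin m) (Fin m) ℝ)
    (hk : k < T) :
    P.Ric T Srho k =
      riccatiStep P.ε (P.A k) (P.B k) (P.R k) (msqrt (Srho k)) (P.Ric T Srho (k + 1)) := by
  rw [Ric, dif_neg (not_le.2 hk), riccatiStep]

theorem Ric_of_le {n m : ℕ} (P : LQData n m) {T k : ℕ} (Srho : ℕ → Matrix (Fin m) (Fin m) ℝ)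
    (hk : T ≤ k) : P.Ric T Srho k = P.F := by
  rw [Ric, dif_pos hk]

end LQData

theorem riccati_posSemidef_general {n m : ℕ} (T : ℕ) (P : LQData n m) (hε : 0 < P.ε)
    (hR : ∀ k < T, (P.R k).PosDef) (hF : P.F.PosDef) (Srho : ℕ → Matrix (Fin m) (Fin m) ℝ) :
    ∀ k ≤ T, (P.Ric T Srho k).PosSemidef := by
  refine fun k => Nat.decreasingInduction (fun k hk ih => ?_) ?_
  · rw [P.Ric_of_lt Srho hk]
    exact riccatiStep_posSemidef hε _ _ (hR k hk) (msqrt_transpose _) ih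
  · rw [P.Ric_of_le Srho le_rfl]
    exact hF.posSemidef

theorem riccati_posSemidef {n m : ℕ} (hn : 1 ≤ n) (hm : 1 ≤ m) (T : ℕ) (hT : 1 ≤ T)
    (P : LQData n m) (hε : 0 < P.ε)
    (hR : ∀ k < T, (P.R k).PosDef) (hSw : ∀ k < T, (P.Sw k).PosDef)
    (hF : P.F.PosDef) (hSini : P.Sini.PosDef)
    (Srho : ℕ → Matrix (Fin m) (Fin m) ℝ) (hSrho : ∀ k < T, (Srho k).PosSemidef) :
    ∀ k ≤ T, (P.Ric T Srho k).PosSemidef :=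
  riccati_posSemidef_general T P hε hR hF Srho
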